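/- arXiv:1411.2770 — 9 statements merged into one kernel-verified Lean document; each statement's English description precedes it below -/
import Mathlib

section
/- Let $q\ge 1$ be an integer and define $u_{1,q}=q$ and $u_{p+1,q}=u_{p,q}(1+u_{p,q})$. Then for all $p\ne p'$, $\gcd(1+u_{p,q},\,1+u_{p',q})=1$. -/
theorem stmt_1 (q : ℕ) (hq : 1 ≤ q) (u : ℕ → ℕ)
    (hu1 : u 1 = q) (hurec : ∀ p ≥ 1, u (p + 1) = u p * (1 + u p)) :
    ∀ p ≥ 1, ∀ p' ≥ 1, p ≠ p' → Nat.gcd (1 + u p) (1 + u p') = 1 := by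
  have hdvd : ∀ p ≥ 1, ∀ k, (1 + u p) ∣ u (p + k + 1) := by
    intro p hp k
    induction k with
    | zero => rw [hurec p hp]; exact dvd_mul_left _ _
    | succ k ih =>
      show (1 + u p) ∣ u (p + k + 1 + 1)
      rw [hurec (p + k + 1) (by omega)]
      exact Dvd.dvd.mul_right ih _
  have key : ∀ p ≥ 1, ∀ p', p < p' → Nat.gcd (1 + u p) (1 + u p') = 1 := by
    intro p hp p' hlt
    have hd : (1 + u p) ∣ u p' := by
      obtain ⟨k, rfl⟩ : ∃ k, p' = p + k + 1 := ⟨p' - p - 1, by omega⟩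
      exact hdvd p hp k
    have h1 : Nat.gcd (1 + u p) (1 + u p') ∣ 1 := by
      have h2 : Nat.gcd (1 + u p) (1 + u p') ∣ u p' :=
        (Nat.gcd_dvd_left _ _).trans hd
      have h3 : Nat.gcd (1 + u p) (1 + u p') ∣ 1 + u p' := Nat.gcd_dvd_right _ _
      have := Nat.dvd_sub h3 h2
      simpa using this
    exact Nat.eq_one_of_dvd_one h1
  intro p hp p' hp' hne
  rcases lt_or_gt_of_ne hne with h | h
  · exact key p hp p' h
  · rw [Nat.gcd_comm]; exact key p' hp' p h
end

section
/- Let $q\ge 1$ be an integer and define $u_{1,q}=q$ and $u_{p+1,q}=u_{p,q}(1+u_{p,q})$. Then for all $p\ge 1$, $\prod_{i=1}^p \frac{1}{1+u_{i,q}} = 1 - q\sum_{i=1}^p \frac{1}{1+u_{i,q}}$ (as rational numbers). -/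
/-!
Write `P p = ∏_{i ≤ p} 1 / (1 + u i)`. The recursion gives the invariant `u (p + 1) * P p = u 1`,
and with it the step `P (p + 1) = P p - u (p + 1) * P p / (1 + u (p + 1)) = P p - q / (1 + u (p + 1))`,
so `P p` and `1 - q * ∑_{i ≤ p} 1 / (1 + u i)` satisfy the same recursion from the same start.
-/

open Finset

section SylvesterProduct

variable {K : Type*} [Field K] {x : ℕ → K}

theorem mul_prod_one_div_one_add_eq (hrec : ∀ p ≥ 1, x (p + 1) = x p * (1 + x p))
    (hne : ∀ i, 1 + x i ≠ 0) (p : ℕ) :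
    x (p + 1) * ∏ i ∈ Icc 1 p, 1 / (1 + x i) = x 1 := by
  induction p with
  | zero => simp
  | succ p ih =>
    rw [prod_Icc_succ_top (by omega), hrec (p + 1) (by omega), ← ih]
    field_simp [hne (p + 1)]

theorem prod_one_div_one_add_eq_one_sub_mul_sum
    (hrec : ∀ p ≥ 1, x (p + 1) = x p * (1 + x p)) (hne : ∀ i, 1 + x i ≠ 0) (p : ℕ) :
    ∏ i ∈ Icc 1 p, 1 / (1 + x i) = 1 - x 1 * ∑ i ∈ Icc 1 p, 1 / (1 + x i) := by
  induction p with
  | zero => simp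
  | succ p ih =>
    have hinv := mul_prod_one_div_one_add_eq hrec hne p
    rw [prod_Icc_succ_top (by omega), sum_Icc_succ_top (by omega), mul_add, ← sub_sub, ← ih,
      ← hinv]
    field_simp [hne (p + 1)]
    ring

end SylvesterProduct

theorem stmt_5_general (q : ℕ) (u : ℕ → ℕ)
    (hu1 : u 1 = q) (hurec : ∀ p ≥ 1, u (p + 1) = u p * (1 + u p)) :
    ∀ p ≥ 1, ∏ i ∈ Finset.Icc 1 p, (1 : ℚ) / (1 + u i)
      = 1 - q * ∑ i ∈ Finset.Icc 1 p, (1 : ℚ) / (1 + u i) := by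
  intro p _
  have hrec : ∀ p ≥ 1, (u (p + 1) : ℚ) = u p * (1 + u p) := by
    intro p hp
    exact_mod_cast hurec p hp
  have hne : ∀ i, 1 + (u i : ℚ) ≠ 0 := fun i => by positivity
  simpa [hu1] using prod_one_div_one_add_eq_one_sub_mul_sum hrec hne p

theorem stmt_5 (q : ℕ) (hq : 1 ≤ q) (u : ℕ → ℕ)
    (hu1 : u 1 = q) (hurec : ∀ p ≥ 1, u (p + 1) = u p * (1 + u p)) :
    ∀ p ≥ 1, ∏ i ∈ Finset.Icc 1 p, (1 : ℚ) / (1 + u i)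
      = 1 - q * ∑ i ∈ Finset.Icc 1 p, (1 : ℚ) / (1 + u i) :=
  stmt_5_general q u hu1 hurec
end

section
/- Let $d\ge 1$ and let $x_1\ge\cdots\ge x_d>0$ and $y_1\ge\cdots\ge y_d>0$ be real numbers such that $\prod_{i=1}^l x_i \ge \prod_{i=1}^l y_i$ for every $1\le l\le d$. Then $\sum_{i=1}^d x_i \ge \sum_{i=1}^d y_i$. -/
/-!
Put `t i = log x i - log y i`. The hypothesis says that every partial sum of `t` is
nonnegative, so Abel summation against the nonincreasing positive weights `y i` gives
`∑ y i * t i ≥ 0`. Termwise, `y * (log x - log y) ≤ x - y` (this is `log u ≤ u - 1`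
at `u = x / y`), and summing yields `∑ y i ≤ ∑ x i`.
-/

open Finset Real

theorem mul_partialSum_le_sum_mul_of_antitoneOn {n : ℕ} {c t : ℕ → ℝ}
    (hc : AntitoneOn c (Set.Icc 1 n)) (ht : ∀ l ≤ n, 0 ≤ ∑ i ∈ Icc 1 l, t i) :
    ∀ k ≤ n, c k * ∑ i ∈ Icc 1 k, t i ≤ ∑ i ∈ Icc 1 k, c i * t i
  | 0, _ => by simp
  | k + 1, hk => by
    have ih := mul_partialSum_le_sum_mul_of_antitoneOn hc ht k (by omega)
    have hck : c (k + 1) * ∑ i ∈ Icc 1 k, t i ≤ c k * ∑ i ∈ Icc 1 k, t i := by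
      rcases Nat.eq_zero_or_pos k with rfl | hk0
      · simp
      · exact mul_le_mul_of_nonneg_right
          (hc ⟨hk0, by omega⟩ ⟨by omega, hk⟩ k.le_succ) (ht k (by omega))
    rw [sum_Icc_succ_top (by omega), sum_Icc_succ_top (by omega), mul_add]
    linarith

theorem sum_mul_nonneg_of_antitoneOn {n : ℕ} {c t : ℕ → ℝ}
    (hc : AntitoneOn c (Set.Icc 1 n)) (hcn : 0 ≤ c n)
    (ht : ∀ l ≤ n, 0 ≤ ∑ i ∈ Icc 1 l, t i) :
    0 ≤ ∑ i ∈ Icc 1 n, c i * t i :=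
  (mul_nonneg hcn (ht n le_rfl)).trans
    (mul_partialSum_le_sum_mul_of_antitoneOn hc ht n le_rfl)

theorem Real.mul_sub_log_le_sub {x y : ℝ} (hx : 0 < x) (hy : 0 < y) :
    y * (log x - log y) ≤ x - y :=
  calc y * (log x - log y) = y * log (x / y) := by rw [log_div hx.ne' hy.ne']
    _ ≤ y * (x / y - 1) :=
      mul_le_mul_of_nonneg_left (log_le_sub_one_of_pos (by positivity)) hy.le
    _ = x - y := by field_simp

theorem stmt_6_general (d : ℕ) (hd : 1 ≤ d) (x y : ℕ → ℝ)
    (hxpos : ∀ i, 1 ≤ i → i ≤ d → 0 < x i)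
    (hypos : ∀ i, 1 ≤ i → i ≤ d → 0 < y i)
    (hymono : ∀ i j, 1 ≤ i → i ≤ j → j ≤ d → y j ≤ y i)
    (hprod : ∀ l, 1 ≤ l → l ≤ d →
      ∏ i ∈ Finset.Icc 1 l, y i ≤ ∏ i ∈ Finset.Icc 1 l, x i) :
    ∑ i ∈ Finset.Icc 1 d, y i ≤ ∑ i ∈ Finset.Icc 1 d, x i := by
  have hmem {l i : ℕ} (hl : l ≤ d) (hi : i ∈ Icc 1 l) : 1 ≤ i ∧ i ≤ d :=
    ⟨(mem_Icc.1 hi).1, (mem_Icc.1 hi).2.trans hl⟩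
  have hlog_partial : ∀ l ≤ d, 0 ≤ ∑ i ∈ Icc 1 l, (log (x i) - log (y i)) := by
    intro l hl
    rcases Nat.eq_zero_or_pos l with rfl | hl0
    · simp
    have hx i hi := hxpos i (hmem hl hi).1 (hmem hl hi).2
    have hy i hi := hypos i (hmem hl hi).1 (hmem hl hi).2
    rw [sum_sub_distrib, ← log_prod fun i hi => (hx i hi).ne',
      ← log_prod fun i hi => (hy i hi).ne', sub_nonneg]
    exact log_le_log (prod_pos hy) (hprod l hl0 hl)
  have hweighted : 0 ≤ ∑ i ∈ Icc 1 d, y i * (log (x i) - log (y i)) :=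
    sum_mul_nonneg_of_antitoneOn (fun i hi j hj hij => hymono i j hi.1 hij hj.2)
      (hypos d hd le_rfl).le hlog_partial
  have hterm : ∀ i ∈ Icc 1 d, y i * (log (x i) - log (y i)) ≤ x i - y i := fun i hi =>
    mul_sub_log_le_sub (hxpos i (hmem le_rfl hi).1 (hmem le_rfl hi).2)
      (hypos i (hmem le_rfl hi).1 (hmem le_rfl hi).2)
  have hdiff := hweighted.trans (sum_le_sum hterm)
  rwa [sum_sub_distrib, sub_nonneg] at hdiff

theorem stmt_6 (d : ℕ) (hd : 1 ≤ d) (x y : ℕ → ℝ)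
    (hxpos : ∀ i, 1 ≤ i → i ≤ d → 0 < x i)
    (hypos : ∀ i, 1 ≤ i → i ≤ d → 0 < y i)
    (hxmono : ∀ i j, 1 ≤ i → i ≤ j → j ≤ d → x j ≤ x i)
    (hymono : ∀ i j, 1 ≤ i → i ≤ j → j ≤ d → y j ≤ y i)
    (hprod : ∀ l, 1 ≤ l → l ≤ d →
      ∏ i ∈ Finset.Icc 1 l, y i ≤ ∏ i ∈ Finset.Icc 1 l, x i) :
    ∑ i ∈ Finset.Icc 1 d, y i ≤ ∑ i ∈ Finset.Icc 1 d, x i :=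
  stmt_6_general d hd x y hxpos hypos hymono hprod
end

section
/- Let $d\ge 1$ and let $x_1\ge\cdots\ge x_d>0$ and $y_1\ge\cdots\ge y_d>0$ be real numbers such that $\prod_{i=1}^l x_i \ge \prod_{i=1}^l y_i$ for every $1\le l\le d$ and $\sum_{i=1}^d x_i = \sum_{i=1}^d y_i$. Then $x_i = y_i$ for every $i$. -/
/-!
Put `uᵢ = log (xᵢ / yᵢ)`. Product domination says that every partial sum `u₁ + ⋯ + u_l` is
nonnegative, so Abel summation against the nonincreasing positive weights `yᵢ` gives
`∑ yᵢ uᵢ ≥ 0`. On the other hand `yᵢ uᵢ ≤ xᵢ - yᵢ` by `log t ≤ t - 1`, strictly unless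
`xᵢ = yᵢ`, and `∑ (xᵢ - yᵢ) = 0`. Hence no index can have `xᵢ ≠ yᵢ`.
-/

open Finset Real

section AbelSummation

variable {R : Type*} [CommRing R] [LinearOrder R] [IsStrictOrderedRing R]

theorem mul_sum_Icc_le_sum_Icc_mul_of_antitoneOn {c u : ℕ → R} {n : ℕ}
    (hc : AntitoneOn c (Set.Icc 1 n)) (hu : ∀ l ∈ Icc 1 n, 0 ≤ ∑ i ∈ Icc 1 l, u i) :
    c n * ∑ i ∈ Icc 1 n, u i ≤ ∑ i ∈ Icc 1 n, c i * u i := by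
  induction n with
  | zero => simp
  | succ n ih =>
    rcases Nat.eq_zero_or_pos n with rfl | hn
    · simp
    have ih' := ih (hc.mono (Set.Icc_subset_Icc_right n.le_succ))
      fun l hl => hu l (Icc_subset_Icc_right n.le_succ hl)
    have hcn : c (n + 1) ≤ c n :=
      hc ⟨hn, n.le_succ⟩ ⟨by omega, le_rfl⟩ n.le_succ
    have hSn : 0 ≤ ∑ i ∈ Icc 1 n, u i := hu n (mem_Icc.2 ⟨hn, n.le_succ⟩)
    rw [sum_Icc_succ_top (by omega), sum_Icc_succ_top (by omega)]
    nlinarith [mul_le_mul_of_nonneg_right hcn hSn]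

theorem sum_Icc_mul_nonneg_of_antitoneOn {c u : ℕ → R} {n : ℕ}
    (hc : AntitoneOn c (Set.Icc 1 n)) (hc0 : ∀ i ∈ Icc 1 n, 0 ≤ c i)
    (hu : ∀ l ∈ Icc 1 n, 0 ≤ ∑ i ∈ Icc 1 l, u i) :
    0 ≤ ∑ i ∈ Icc 1 n, c i * u i := by
  rcases Nat.eq_zero_or_pos n with rfl | hn
  · simp
  have hn' : n ∈ Icc 1 n := mem_Icc.2 ⟨hn, le_rfl⟩
  exact (mul_nonneg (hc0 n hn') (hu n hn')).trans
    (mul_sum_Icc_le_sum_Icc_mul_of_antitoneOn hc hu)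

end AbelSummation

theorem sum_log_div_nonneg_of_prod_le {ι : Type*} {s : Finset ι} {x y : ι → ℝ}
    (hx : ∀ i ∈ s, 0 < x i) (hy : ∀ i ∈ s, 0 < y i) (h : ∏ i ∈ s, y i ≤ ∏ i ∈ s, x i) :
    0 ≤ ∑ i ∈ s, log (x i / y i) := by
  rw [← log_prod fun i hi => (div_pos (hx i hi) (hy i hi)).ne', prod_div_distrib]
  exact log_nonneg ((one_le_div (prod_pos hy)).2 h)

theorem mul_log_div_le_sub {a b : ℝ} (ha : 0 < a) (hb : 0 < b) : b * log (a / b) ≤ a - b := by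
  have h := mul_le_mul_of_nonneg_left (log_le_sub_one_of_pos (div_pos ha hb)) hb.le
  rwa [mul_sub, mul_div_cancel₀ a hb.ne', mul_one] at h

theorem mul_log_div_lt_sub {a b : ℝ} (ha : 0 < a) (hb : 0 < b) (hab : a ≠ b) :
    b * log (a / b) < a - b := by
  have hne : a / b ≠ 1 := fun h => hab ((div_eq_one_iff_eq hb.ne').1 h)
  have h := mul_lt_mul_of_pos_left (log_lt_sub_one_of_pos (div_pos ha hb) hne) hb
  rwa [mul_sub, mul_div_cancel₀ a hb.ne', mul_one] at h

theorem stmt_7_general (d : ℕ) (x y : ℕ → ℝ)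
    (hxpos : ∀ i, 1 ≤ i → i ≤ d → 0 < x i)
    (hypos : ∀ i, 1 ≤ i → i ≤ d → 0 < y i)
    (hymono : ∀ i j, 1 ≤ i → i ≤ j → j ≤ d → y j ≤ y i)
    (hprod : ∀ l, 1 ≤ l → l ≤ d →
      ∏ i ∈ Finset.Icc 1 l, y i ≤ ∏ i ∈ Finset.Icc 1 l, x i)
    (hsum : ∑ i ∈ Finset.Icc 1 d, x i = ∑ i ∈ Finset.Icc 1 d, y i) :
    ∀ i, 1 ≤ i → i ≤ d → x i = y i := by
  have hx : ∀ i ∈ Icc 1 d, 0 < x i := fun i hi => hxpos i (mem_Icc.1 hi).1 (mem_Icc.1 hi).2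
  have hy : ∀ i ∈ Icc 1 d, 0 < y i := fun i hi => hypos i (mem_Icc.1 hi).1 (mem_Icc.1 hi).2
  have hpartial : ∀ l ∈ Icc 1 d, 0 ≤ ∑ i ∈ Icc 1 l, log (x i / y i) := fun l hl =>
    have hsub := Icc_subset_Icc_right (mem_Icc.1 hl).2
    sum_log_div_nonneg_of_prod_le (fun i hi => hx i (hsub hi)) (fun i hi => hy i (hsub hi))
      (hprod l (mem_Icc.1 hl).1 (mem_Icc.1 hl).2)
  have hweighted : 0 ≤ ∑ i ∈ Icc 1 d, y i * log (x i / y i) :=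
    sum_Icc_mul_nonneg_of_antitoneOn (fun i hi j hj hij => hymono i j hi.1 hij hj.2)
      (fun i hi => (hy i hi).le) hpartial
  intro i hi1 hid
  by_contra hne
  have hlt : ∑ j ∈ Icc 1 d, y j * log (x j / y j) < ∑ j ∈ Icc 1 d, (x j - y j) :=
    sum_lt_sum (fun j hj => mul_log_div_le_sub (hx j hj) (hy j hj))
      ⟨i, mem_Icc.2 ⟨hi1, hid⟩, mul_log_div_lt_sub (hxpos i hi1 hid) (hypos i hi1 hid) hne⟩
  rw [sum_sub_distrib, hsum, sub_self] at hlt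
  exact hlt.not_ge hweighted

theorem stmt_7 (d : ℕ) (hd : 1 ≤ d) (x y : ℕ → ℝ)
    (hxpos : ∀ i, 1 ≤ i → i ≤ d → 0 < x i)
    (hypos : ∀ i, 1 ≤ i → i ≤ d → 0 < y i)
    (hxmono : ∀ i j, 1 ≤ i → i ≤ j → j ≤ d → x j ≤ x i)
    (hymono : ∀ i j, 1 ≤ i → i ≤ j → j ≤ d → y j ≤ y i)
    (hprod : ∀ l, 1 ≤ l → l ≤ d →
      ∏ i ∈ Finset.Icc 1 l, y i ≤ ∏ i ∈ Finset.Icc 1 l, x i)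
    (hsum : ∑ i ∈ Finset.Icc 1 d, x i = ∑ i ∈ Finset.Icc 1 d, y i) :
    ∀ i, 1 ≤ i → i ≤ d → x i = y i :=
  stmt_7_general d x y hxpos hypos hymono hprod hsum
end

section
/- Let $d,q$ be positive integers and let $x_1\ge\cdots\ge x_d>0$ be real numbers such that $\prod_{i=1}^l x_i \le 1 - q\sum_{i=1}^l x_i$ for every $1\le l\le d$. Then $\sum_{i=1}^d x_i \le \sum_{i=1}^d \frac{1}{1+u_{i,q}}$, where $u_{1,q}=q$ and $u_{p+1,q}=u_{p,q}(1+u_{p,q})$. -/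
/-!
Put `a i = 1 / (1 + u i)`. From `u (i + 1) = u i * (1 + u i)` we get
`a i = 1 / u i - 1 / u (i + 1) = u i / u (i + 1)`, so both the sum and the product of the `a i`
telescope and `a` satisfies every constraint with equality.

We prove `S l ≤ A l` for the prefix sums of `x` and `a` by strong induction on `l`. If it fails
at `l`, replace `x l` by `β = A l - S (l - 1)`, which lies in `[a l, x l)`. The new sequence `b`
is still nonincreasing and, by the induction hypothesis, every tail sum of `b` over `(j, l]`
dominates that of `a`. Abel summation against the increasing weights `1 / b i`, together with
`t ≤ exp (t - 1)`, then gives `∏ a ≤ ∏ b`, i.e. `1 - q * A l ≤ P * β` with `P = ∏_{i < l} x i`.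
The constraint at `l` reads `P * x l + q * x l ≤ 1 - q * S (l - 1)`, so
`(P + q) * (x l - β) ≤ 0`, contradicting `β < x l`.
-/

open Finset

theorem mul_sum_Ioc_le_sum_Ioc_mul_of_monotoneOn {d w : ℕ → ℝ} {n : ℕ}
    (hw : MonotoneOn w (Set.Ioc 0 n)) (htail : ∀ j ≤ n, 0 ≤ ∑ i ∈ Ioc j n, d i)
    {j : ℕ} (hj : j ≤ n) : w (j + 1) * ∑ i ∈ Ioc j n, d i ≤ ∑ i ∈ Ioc j n, d i * w i := by
  induction hj using Nat.decreasingInduction with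
  | self => simp
  | of_succ k hk ih =>
    have hw_succ :
        w (k + 1) * ∑ i ∈ Ioc (k + 1) n, d i ≤ w (k + 2) * ∑ i ∈ Ioc (k + 1) n, d i := by
      rcases (Nat.succ_le_of_lt hk).eq_or_lt with h | h
      · simp [← h]
      · exact mul_le_mul_of_nonneg_right
          (hw ⟨by omega, by omega⟩ ⟨by omega, by omega⟩ (by omega)) (htail _ h.le)
    rw [← insert_Ioc_add_one_left_eq_Ioc hk, sum_insert (by simp), sum_insert (by simp)]
    linarith

theorem sum_Ioc_mul_nonneg_of_monotoneOn {d w : ℕ → ℝ} {n : ℕ}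
    (hw : MonotoneOn w (Set.Ioc 0 n)) (hw_nonneg : ∀ i ∈ Ioc 0 n, 0 ≤ w i)
    (htail : ∀ j ≤ n, 0 ≤ ∑ i ∈ Ioc j n, d i) : 0 ≤ ∑ i ∈ Ioc 0 n, d i * w i := by
  rcases n.eq_zero_or_pos with rfl | hn
  · simp
  calc 0 ≤ w 1 * ∑ i ∈ Ioc 0 n, d i :=
        mul_nonneg (hw_nonneg 1 (by simp only [mem_Ioc]; omega)) (htail 0 hn.le)
    _ ≤ _ := mul_sum_Ioc_le_sum_Ioc_mul_of_monotoneOn hw htail n.zero_le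

theorem prod_Ioc_le_prod_Ioc_of_tail_sum_le {b c : ℕ → ℝ} {n : ℕ}
    (hb : ∀ i ∈ Ioc 0 n, 0 < b i) (hc : ∀ i ∈ Ioc 0 n, 0 ≤ c i)
    (hanti : AntitoneOn b (Set.Ioc 0 n))
    (htail : ∀ j ≤ n, ∑ i ∈ Ioc j n, c i ≤ ∑ i ∈ Ioc j n, b i) :
    ∏ i ∈ Ioc 0 n, c i ≤ ∏ i ∈ Ioc 0 n, b i := by
  have hweighted : 0 ≤ ∑ i ∈ Ioc 0 n, (b i - c i) * (b i)⁻¹ := by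
    refine sum_Ioc_mul_nonneg_of_monotoneOn (fun i hi j hj hij => ?_)
      (fun i hi => (inv_pos.2 (hb i hi)).le) (fun j hj => ?_)
    · exact inv_anti₀ (hb j (by simpa using hj)) (hanti hi hj hij)
    · simpa [sum_sub_distrib] using htail j hj
  have hratio : ∑ i ∈ Ioc 0 n, (c i / b i - 1) = -∑ i ∈ Ioc 0 n, (b i - c i) * (b i)⁻¹ := by
    rw [← sum_neg_distrib]
    refine sum_congr rfl fun i hi => ?_
    field_simp [(hb i hi).ne']
    ring
  calc ∏ i ∈ Ioc 0 n, c i = (∏ i ∈ Ioc 0 n, b i) * ∏ i ∈ Ioc 0 n, c i / b i := by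
        rw [← prod_mul_distrib]
        exact prod_congr rfl fun i hi => (mul_div_cancel₀ _ (hb i hi).ne').symm
    _ ≤ (∏ i ∈ Ioc 0 n, b i) * ∏ i ∈ Ioc 0 n, Real.exp (c i / b i - 1) := by
        gcongr with i hi
        · exact prod_nonneg fun i hi => (hb i hi).le
        · exact fun i hi => div_nonneg (hc i hi) (hb i hi).le
        · simpa using Real.add_one_le_exp (c i / b i - 1)
    _ ≤ ∏ i ∈ Ioc 0 n, b i := by
        rw [← Real.exp_sum, hratio]
        exact mul_le_of_le_one_right (prod_nonneg fun i hi => (hb i hi).le)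
          (Real.exp_le_one_iff.2 (neg_nonpos.2 hweighted))

section SylvesterRecursion

variable {v : ℕ → ℝ}

theorem pos_of_sylvester_rec (hv1 : 0 < v 1) (hv : ∀ p ≥ 1, v (p + 1) = v p * (1 + v p))
    {p : ℕ} (hp : 1 ≤ p) : 0 < v p := by
  induction p, hp using Nat.le_induction with
  | base => exact hv1
  | succ p hp ih => rw [hv p hp]; positivity

theorem sum_Ioc_one_div_one_add_of_sylvester_rec (hv1 : 0 < v 1)
    (hv : ∀ p ≥ 1, v (p + 1) = v p * (1 + v p)) (l : ℕ) :
    ∑ i ∈ Ioc 0 l, 1 / (1 + v i) = 1 / v 1 - 1 / v (l + 1) := by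
  induction l with
  | zero => simp
  | succ l ih =>
    have hpos := pos_of_sylvester_rec hv1 hv (Nat.le_add_left 1 l)
    rw [sum_Ioc_succ_top l.zero_le, ih, hv (l + 1) (by omega)]
    field_simp
    ring

theorem prod_Ioc_one_div_one_add_of_sylvester_rec (hv1 : 0 < v 1)
    (hv : ∀ p ≥ 1, v (p + 1) = v p * (1 + v p)) (l : ℕ) :
    ∏ i ∈ Ioc 0 l, 1 / (1 + v i) = v 1 / v (l + 1) := by
  induction l with
  | zero => simp [hv1.ne']
  | succ l ih =>
    have hpos := pos_of_sylvester_rec hv1 hv (Nat.le_add_left 1 l)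
    rw [prod_Ioc_succ_top l.zero_le, ih, hv (l + 1) (by omega)]
    field_simp

theorem prod_Ioc_one_div_one_add_eq_one_sub_mul_sum (hv1 : 0 < v 1)
    (hv : ∀ p ≥ 1, v (p + 1) = v p * (1 + v p)) (l : ℕ) :
    ∏ i ∈ Ioc 0 l, 1 / (1 + v i) = 1 - v 1 * ∑ i ∈ Ioc 0 l, 1 / (1 + v i) := by
  rw [prod_Ioc_one_div_one_add_of_sylvester_rec hv1 hv,
    sum_Ioc_one_div_one_add_of_sylvester_rec hv1 hv]
  field_simp
  ring

end SylvesterRecursion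

@[to_additive]
theorem prod_Ioc_update_succ_top {M : Type*} [CommMonoid M] (f : ℕ → M) {j l : ℕ} (hj : j ≤ l)
    (y : M) : ∏ i ∈ Ioc j (l + 1), Function.update f (l + 1) y i = (∏ i ∈ Ioc j l, f i) * y := by
  rw [prod_Ioc_succ_top hj, Function.update_self]
  congr 1
  exact prod_congr rfl fun i hi => Function.update_of_ne (by simp only [mem_Ioc] at hi; omega) _ _

theorem sum_Ioc_succ_le_of_saturating {q : ℝ} (hq : 0 ≤ q) {a x : ℕ → ℝ} {l : ℕ}
    (ha : ∀ i ∈ Ioc 0 (l + 1), 0 < a i)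
    (hsat : ∏ i ∈ Ioc 0 (l + 1), a i = 1 - q * ∑ i ∈ Ioc 0 (l + 1), a i)
    (hx : ∀ i ∈ Ioc 0 (l + 1), 0 < x i) (hanti : AntitoneOn x (Set.Ioc 0 (l + 1)))
    (hcon : ∏ i ∈ Ioc 0 (l + 1), x i ≤ 1 - q * ∑ i ∈ Ioc 0 (l + 1), x i)
    (ih : ∀ j ≤ l, ∑ i ∈ Ioc 0 j, x i ≤ ∑ i ∈ Ioc 0 j, a i) :
    ∑ i ∈ Ioc 0 (l + 1), x i ≤ ∑ i ∈ Ioc 0 (l + 1), a i := by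
  by_contra! hlt
  set β := ∑ i ∈ Ioc 0 (l + 1), a i - ∑ i ∈ Ioc 0 l, x i with hβ
  set b := Function.update x (l + 1) β
  have hmem : l + 1 ∈ Ioc 0 (l + 1) := by simp
  have hx_succ := sum_Ioc_succ_top l.zero_le x
  have ha_succ := sum_Ioc_succ_top l.zero_le a
  rw [hx_succ, prod_Ioc_succ_top l.zero_le] at hcon
  have hβ_lt : β < x (l + 1) := by linarith
  have hβ_pos : 0 < β := by linarith [ih l le_rfl, ha _ hmem]
  have hb_pos : ∀ i ∈ Ioc 0 (l + 1), 0 < b i := fun i hi => by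
    rcases eq_or_ne i (l + 1) with rfl | hi'
    · simpa [b] using hβ_pos
    · simpa [b, hi'] using hx i hi
  have hb_anti : AntitoneOn b (Set.Ioc 0 (l + 1)) := fun i hi j hj hij => by
    rcases eq_or_ne j (l + 1) with rfl | hj'
    · rcases eq_or_ne i (l + 1) with rfl | hi'
      · exact le_rfl
      · simpa [b, hi'] using hβ_lt.le.trans (hanti hi hj hij)
    · have hi' : i ≠ l + 1 := by simp only [Set.mem_Ioc] at hj; omega
      simpa [b, hi', hj'] using hanti hi hj hij
  have hb_tail : ∀ j ≤ l + 1, ∑ i ∈ Ioc j (l + 1), a i ≤ ∑ i ∈ Ioc j (l + 1), b i := by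
    intro j hj
    rcases hj.eq_or_lt with rfl | hj
    · simp
    rw [sum_Ioc_update_succ_top x (Nat.le_of_lt_succ hj)]
    have hx_split := sum_Ioc_consecutive x j.zero_le (Nat.le_of_lt_succ hj)
    have ha_split := sum_Ioc_consecutive a j.zero_le hj.le
    linarith [ih j (Nat.le_of_lt_succ hj)]
  have hprod := prod_Ioc_le_prod_Ioc_of_tail_sum_le hb_pos (fun i hi => (ha i hi).le) hb_anti
    hb_tail
  rw [prod_Ioc_update_succ_top x l.zero_le, hsat] at hprod
  have hP : 0 < ∏ i ∈ Ioc 0 l, x i :=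
    prod_pos fun i hi => hx i (by simp only [mem_Ioc] at hi ⊢; omega)
  nlinarith [mul_lt_mul_of_pos_left hβ_lt (add_pos_of_pos_of_nonneg hP hq)]

theorem sum_Ioc_le_of_saturating {q : ℝ} (hq : 0 ≤ q) {a x : ℕ → ℝ} {d : ℕ}
    (ha : ∀ i ∈ Ioc 0 d, 0 < a i)
    (hsat : ∀ l ∈ Ioc 0 d, ∏ i ∈ Ioc 0 l, a i = 1 - q * ∑ i ∈ Ioc 0 l, a i)
    (hx : ∀ i ∈ Ioc 0 d, 0 < x i) (hanti : AntitoneOn x (Set.Ioc 0 d))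
    (hcon : ∀ l ∈ Ioc 0 d, ∏ i ∈ Ioc 0 l, x i ≤ 1 - q * ∑ i ∈ Ioc 0 l, x i)
    {l : ℕ} (hl : l ≤ d) : ∑ i ∈ Ioc 0 l, x i ≤ ∑ i ∈ Ioc 0 l, a i := by
  induction l using Nat.strong_induction_on with
  | _ l ih =>
    cases l with
    | zero => simp
    | succ l =>
      have hsub : Ioc 0 (l + 1) ⊆ Ioc 0 d := Ioc_subset_Ioc_right hl
      have hmem : l + 1 ∈ Ioc 0 d := by simp only [mem_Ioc]; omega
      exact sum_Ioc_succ_le_of_saturating hq (fun i hi => ha i (hsub hi)) (hsat _ hmem)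
        (fun i hi => hx i (hsub hi)) (hanti.mono (Set.Ioc_subset_Ioc_right hl)) (hcon _ hmem)
        fun j hj => ih j (by omega) (by omega)

theorem stmt_8_general (d q : ℕ) (hq : 1 ≤ q) (u : ℕ → ℕ)
    (hu1 : u 1 = q) (hurec : ∀ p ≥ 1, u (p + 1) = u p * (1 + u p))
    (x : ℕ → ℝ)
    (hxpos : ∀ i, 1 ≤ i → i ≤ d → 0 < x i)
    (hxmono : ∀ i j, 1 ≤ i → i ≤ j → j ≤ d → x j ≤ x i)
    (hconstr : ∀ l, 1 ≤ l → l ≤ d →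
      ∏ i ∈ Finset.Icc 1 l, x i ≤ 1 - q * ∑ i ∈ Finset.Icc 1 l, x i) :
    ∑ i ∈ Finset.Icc 1 d, x i ≤ ∑ i ∈ Finset.Icc 1 d, (1 : ℝ) / (1 + u i) := by
  have hv1 : (0 : ℝ) < u 1 := by rw [hu1]; exact_mod_cast hq
  have hv : ∀ p ≥ 1, (u (p + 1) : ℝ) = u p * (1 + u p) := fun p hp => by
    rw [hurec p hp]; push_cast; ring
  have hIcc : ∀ l, Icc 1 l = Ioc 0 l := fun l => Icc_add_one_left_eq_Ioc 0 l
  simp only [hIcc]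
  refine sum_Ioc_le_of_saturating q.cast_nonneg (fun i hi => ?_) (fun l _ => ?_)
    (fun i hi => ?_) (fun i hi j hj hij => ?_) (fun l hl => ?_) le_rfl
  · simp only [mem_Ioc] at hi
    have := pos_of_sylvester_rec (v := fun p => (u p : ℝ)) hv1 hv hi.1
    positivity
  · simpa [hu1] using
      prod_Ioc_one_div_one_add_eq_one_sub_mul_sum (v := fun p => (u p : ℝ)) hv1 hv l
  · simp only [mem_Ioc] at hi
    exact hxpos i hi.1 hi.2
  · exact hxmono i j hi.1 hij hj.2
  · simp only [mem_Ioc] at hl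
    simpa only [hIcc] using hconstr l hl.1 hl.2

theorem stmt_8 (d q : ℕ) (hd : 1 ≤ d) (hq : 1 ≤ q) (u : ℕ → ℕ)
    (hu1 : u 1 = q) (hurec : ∀ p ≥ 1, u (p + 1) = u p * (1 + u p))
    (x : ℕ → ℝ)
    (hxpos : ∀ i, 1 ≤ i → i ≤ d → 0 < x i)
    (hxmono : ∀ i j, 1 ≤ i → i ≤ j → j ≤ d → x j ≤ x i)
    (hconstr : ∀ l, 1 ≤ l → l ≤ d →
      ∏ i ∈ Finset.Icc 1 l, x i ≤ 1 - q * ∑ i ∈ Finset.Icc 1 l, x i) :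
    ∑ i ∈ Finset.Icc 1 d, x i ≤ ∑ i ∈ Finset.Icc 1 d, (1 : ℝ) / (1 + u i) :=
  stmt_8_general d q hq u hu1 hurec x hxpos hxmono hconstr
end

section
/- Let $d,q$ be positive integers and let $x_1\ge\cdots\ge x_d>0$ be real numbers with $\prod_{i=1}^l x_i \le 1 - q\sum_{i=1}^l x_i$ for every $1\le l\le d$ and $\sum_{i=1}^d x_i = \sum_{i=1}^d \frac{1}{1+u_{i,q}}$. Then $x_i = \frac{1}{1+u_{i,q}}$ for every $i$. -/
/-!
Write `yᵢ = 1/(1 + uᵢ)`. Since `u_{l+1} = q ∏_{i ≤ l} (1 + uᵢ)`, the sequence `y` satisfies every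
constraint with equality: `∏_{i ≤ l} yᵢ = 1 - q ∑_{i ≤ l} yᵢ`.

Suppose `x` agrees with `y` below some index `i`, and let `l ≥ i` be the first index with
`∑_{j ≤ l} yⱼ ≤ ∑_{j ≤ l} xⱼ` (it exists since the full sums agree). All earlier partial sums
of `x` are at most those of `y`, so Abel summation against the increasing weights `1/xⱼ` gives
`∑_{j ≤ l} (xⱼ - yⱼ)/xⱼ ≥ 0`, and `log t ≥ 1 - 1/t`, strict unless `t = 1`, turns this into
`∏_{j ≤ l} yⱼ < ∏_{j ≤ l} xⱼ` unless `x = y` up to `l`. The constraint on `x` at `l` rules out the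
strict inequality, so `xᵢ = yᵢ`.
-/

open Finset

theorem inv_mul_sub_le_log_sub_log {a b : ℝ} (ha : 0 < a) (hb : 0 < b) :
    a⁻¹ * (a - b) ≤ Real.log a - Real.log b := by
  rw [← neg_sub (Real.log b), ← Real.log_div hb.ne' ha.ne', inv_mul_eq_div, ← neg_sub b a,
    neg_div, sub_div, div_self ha.ne', neg_le_neg_iff]
  exact Real.log_le_sub_one_of_pos (div_pos hb ha)

theorem inv_mul_sub_lt_log_sub_log {a b : ℝ} (ha : 0 < a) (hb : 0 < b) (hab : a ≠ b) :
    a⁻¹ * (a - b) < Real.log a - Real.log b := by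
  rw [← neg_sub (Real.log b), ← Real.log_div hb.ne' ha.ne', inv_mul_eq_div, ← neg_sub b a,
    neg_div, sub_div, div_self ha.ne', neg_lt_neg_iff]
  exact Real.log_lt_sub_one_of_pos (div_pos hb ha) (by rwa [Ne, div_eq_one_iff_eq ha.ne', eq_comm])

theorem mul_sum_Icc_le_sum_mul_of_monotoneOn {w δ : ℕ → ℝ} {n : ℕ}
    (hw : MonotoneOn w (Set.Icc 1 n)) (hδ : ∀ k < n, ∑ i ∈ Icc 1 k, δ i ≤ 0) :
    w n * ∑ i ∈ Icc 1 n, δ i ≤ ∑ i ∈ Icc 1 n, w i * δ i := by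
  induction n with
  | zero => simp
  | succ n ih =>
    rcases Nat.eq_zero_or_pos n with rfl | hn
    · simp
    have hwn : w n ≤ w (n + 1) := hw ⟨hn, by omega⟩ ⟨by omega, le_rfl⟩ (by omega)
    have ih' := ih (hw.mono (Set.Icc_subset_Icc_right (by omega))) fun k hk => hδ k (by omega)
    have hδn := hδ n (by omega)
    rw [sum_Icc_succ_top (by omega), sum_Icc_succ_top (by omega)]
    nlinarith

theorem eqOn_Icc_of_prod_le_prod {x y : ℕ → ℝ} {n : ℕ}
    (hxpos : ∀ i ∈ Icc 1 n, 0 < x i) (hypos : ∀ i ∈ Icc 1 n, 0 < y i)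
    (hx : AntitoneOn x (Set.Icc 1 n))
    (hpartial : ∀ k < n, ∑ i ∈ Icc 1 k, x i ≤ ∑ i ∈ Icc 1 k, y i)
    (hsum : ∑ i ∈ Icc 1 n, y i ≤ ∑ i ∈ Icc 1 n, x i)
    (hprod : ∏ i ∈ Icc 1 n, x i ≤ ∏ i ∈ Icc 1 n, y i) :
    ∀ i ∈ Icc 1 n, x i = y i := by
  by_contra! ⟨i, hi, hne⟩
  have hn : n ∈ Icc 1 n := mem_Icc.2 ⟨(mem_Icc.1 hi).1.trans (mem_Icc.1 hi).2, le_rfl⟩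
  have habel := mul_sum_Icc_le_sum_mul_of_monotoneOn (w := fun i => (x i)⁻¹)
    (δ := fun i => x i - y i)
    (fun a ha b hb hab => inv_anti₀ (hxpos b (by simpa using hb)) (hx ha hb hab))
    (fun k hk => by simpa [sum_sub_distrib] using hpartial k hk)
  have hsum_nonneg : 0 ≤ (x n)⁻¹ * ∑ i ∈ Icc 1 n, (x i - y i) :=
    mul_nonneg (inv_nonneg.2 (hxpos n hn).le) (by simpa [sum_sub_distrib] using hsum)
  have hlog : ∑ i ∈ Icc 1 n, (x i)⁻¹ * (x i - y i) <
      ∑ i ∈ Icc 1 n, (Real.log (x i) - Real.log (y i)) :=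
    sum_lt_sum (fun j hj => inv_mul_sub_le_log_sub_log (hxpos j hj) (hypos j hj))
      ⟨i, hi, inv_mul_sub_lt_log_sub_log (hxpos i hi) (hypos i hi) hne⟩
  have hlog_prod : Real.log (∏ i ∈ Icc 1 n, y i) < Real.log (∏ i ∈ Icc 1 n, x i) := by
    rw [Real.log_prod (fun j hj => (hypos j hj).ne'), Real.log_prod (fun j hj => (hxpos j hj).ne')]
    rw [sum_sub_distrib] at hlog
    linarith
  rw [Real.log_lt_log_iff (prod_pos hypos) (prod_pos hxpos)] at hlog_prod
  linarith

theorem eqOn_Icc_of_sum_eq {q : ℝ} (hq : 0 ≤ q) {x y : ℕ → ℝ} {d : ℕ}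
    (hxpos : ∀ i ∈ Icc 1 d, 0 < x i) (hypos : ∀ i ∈ Icc 1 d, 0 < y i)
    (hx : AntitoneOn x (Set.Icc 1 d))
    (hxconstr : ∀ l ∈ Icc 1 d, ∏ i ∈ Icc 1 l, x i ≤ 1 - q * ∑ i ∈ Icc 1 l, x i)
    (hyconstr : ∀ l ∈ Icc 1 d, 1 - q * ∑ i ∈ Icc 1 l, y i ≤ ∏ i ∈ Icc 1 l, y i)
    (hsum : ∑ i ∈ Icc 1 d, x i = ∑ i ∈ Icc 1 d, y i) :
    ∀ i ∈ Icc 1 d, x i = y i := by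
  intro i hi
  induction i using Nat.strong_induction_on with
  | _ i ih =>
    obtain ⟨hi1, hid⟩ := mem_Icc.1 hi
    have hex : ∃ l, i ≤ l ∧ ∑ j ∈ Icc 1 l, y j ≤ ∑ j ∈ Icc 1 l, x j := ⟨d, hid, hsum.ge⟩
    have hld : Nat.find hex ≤ d := Nat.find_min' hex ⟨hid, hsum.ge⟩
    obtain ⟨hil, hl⟩ := Nat.find_spec hex
    set l := Nat.find hex
    have hpartial : ∀ k < l, ∑ j ∈ Icc 1 k, x j ≤ ∑ j ∈ Icc 1 k, y j := by
      intro k hk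
      by_cases hki : k < i
      · refine (sum_congr rfl fun j hj => ?_).le
        obtain ⟨hj1, hjk⟩ := mem_Icc.1 hj
        exact ih j (by omega) (mem_Icc.2 ⟨hj1, by omega⟩)
      · exact (not_le.1 fun h => Nat.find_min hex hk ⟨by omega, h⟩).le
    have hmem : l ∈ Icc 1 d := mem_Icc.2 ⟨by omega, hld⟩
    have hsub : Icc 1 l ⊆ Icc 1 d := Icc_subset_Icc_right hld
    refine eqOn_Icc_of_prod_le_prod (fun j hj => hxpos j (hsub hj)) (fun j hj => hypos j (hsub hj))
      (hx.mono (Set.Icc_subset_Icc_right hld)) hpartial hl ?_ i (mem_Icc.2 ⟨hi1, hil⟩)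
    calc ∏ j ∈ Icc 1 l, x j
        ≤ 1 - q * ∑ j ∈ Icc 1 l, x j := hxconstr _ hmem
      _ ≤ 1 - q * ∑ j ∈ Icc 1 l, y j := by gcongr
      _ ≤ ∏ j ∈ Icc 1 l, y j := hyconstr _ hmem

section Sylvester

variable {q : ℕ} {u : ℕ → ℕ}

theorem mul_prod_one_add_eq (hu1 : u 1 = q) (hurec : ∀ p ≥ 1, u (p + 1) = u p * (1 + u p))
    (l : ℕ) : q * ∏ i ∈ Icc 1 l, (1 + u i) = u (l + 1) := by
  induction l with
  | zero => simp [hu1]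
  | succ l ih => rw [prod_Icc_succ_top (by omega), ← mul_assoc, ih, hurec (l + 1) (by omega)]

theorem prod_one_div_eq_one_sub_mul_sum (hu1 : u 1 = q)
    (hurec : ∀ p ≥ 1, u (p + 1) = u p * (1 + u p)) (l : ℕ) :
    ∏ i ∈ Icc 1 l, (1 : ℝ) / (1 + u i) = 1 - q * ∑ i ∈ Icc 1 l, (1 : ℝ) / (1 + u i) := by
  induction l with
  | zero => simp
  | succ l ih =>
    have hu : (u (l + 1) : ℝ) = q * ∏ i ∈ Icc 1 l, (1 + (u i : ℝ)) := by
      exact_mod_cast (mul_prod_one_add_eq hu1 hurec l).symm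
    have hprod : ∏ i ∈ Icc 1 l, (1 : ℝ) / (1 + u i) = (∏ i ∈ Icc 1 l, (1 + (u i : ℝ)))⁻¹ := by
      simp [prod_inv_distrib]
    have hA : 0 < ∏ i ∈ Icc 1 l, (1 + (u i : ℝ)) := prod_pos fun i _ => by positivity
    rw [prod_Icc_succ_top (by omega), sum_Icc_succ_top (by omega), mul_add, ← sub_sub, ← ih,
      hprod, hu]
    field_simp
    ring

end Sylvester

theorem stmt_9_general (d q : ℕ) (u : ℕ → ℕ)
    (hu1 : u 1 = q) (hurec : ∀ p ≥ 1, u (p + 1) = u p * (1 + u p))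
    (x : ℕ → ℝ)
    (hxpos : ∀ i, 1 ≤ i → i ≤ d → 0 < x i)
    (hxmono : ∀ i j, 1 ≤ i → i ≤ j → j ≤ d → x j ≤ x i)
    (hconstr : ∀ l, 1 ≤ l → l ≤ d →
      ∏ i ∈ Finset.Icc 1 l, x i ≤ 1 - q * ∑ i ∈ Finset.Icc 1 l, x i)
    (hsum : ∑ i ∈ Finset.Icc 1 d, x i = ∑ i ∈ Finset.Icc 1 d, (1 : ℝ) / (1 + u i)) :
    ∀ i, 1 ≤ i → i ≤ d → x i = 1 / (1 + u i) := by
  intro i hi1 hid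
  refine eqOn_Icc_of_sum_eq (Nat.cast_nonneg q)
    (fun j hj => hxpos j (mem_Icc.1 hj).1 (mem_Icc.1 hj).2) (fun j _ => by positivity)
    (fun a ha b hb hab => hxmono a b ha.1 hab hb.2)
    (fun l hl => hconstr l (mem_Icc.1 hl).1 (mem_Icc.1 hl).2)
    (fun l _ => (prod_one_div_eq_one_sub_mul_sum hu1 hurec l).ge) hsum i (mem_Icc.2 ⟨hi1, hid⟩)

theorem stmt_9 (d q : ℕ) (hd : 1 ≤ d) (hq : 1 ≤ q) (u : ℕ → ℕ)
    (hu1 : u 1 = q) (hurec : ∀ p ≥ 1, u (p + 1) = u p * (1 + u p))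
    (x : ℕ → ℝ)
    (hxpos : ∀ i, 1 ≤ i → i ≤ d → 0 < x i)
    (hxmono : ∀ i j, 1 ≤ i → i ≤ j → j ≤ d → x j ≤ x i)
    (hconstr : ∀ l, 1 ≤ l → l ≤ d →
      ∏ i ∈ Finset.Icc 1 l, x i ≤ 1 - q * ∑ i ∈ Finset.Icc 1 l, x i)
    (hsum : ∑ i ∈ Finset.Icc 1 d, x i = ∑ i ∈ Finset.Icc 1 d, (1 : ℝ) / (1 + u i)) :
    ∀ i, 1 ≤ i → i ≤ d → x i = 1 / (1 + u i) :=
  stmt_9_general d q u hu1 hurec x hxpos hxmono hconstr hsum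
end

section
/- Let $x_1,\ldots,x_d>0$ and $c_1,\ldots,c_d\ge 1$ be real numbers such that $1-\prod_{i=1}^d x_i < \sum_{i=1}^d c_i x_i < 1$. Then there exists $z\in\mathbb{N}^d\setminus\{0\}$ such that $\frac{z_j}{1+\sum_{i=1}^d c_i z_i} < x_j$ for every $j$. -/
/-!
The matrix `A = diag(1/x) - 𝟙 cᵀ` has `det A = (1 - ∑ cᵢ xᵢ) / ∏ xᵢ`, which the hypotheses place
in `(0, 1)`. Minkowski's theorem for the symmetric convex body `{v | ‖A v‖_∞ < 1}`, of volume
`2ᵈ / det A > 2ᵈ`, gives a nonzero `w ∈ ℤᵈ` with `|w_j / x_j - ∑ cᵢ wᵢ| < 1` for all `j`.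
Up to replacing `w` by `-w` some `w_j` is positive, and then `z = max(w, 0)` works:
as `cᵢ ≥ 0`, passing from `w` to `z` only increases `∑ cᵢ wᵢ`.
-/

open MeasureTheory Matrix Finset Submodule

section LinearForms

variable {ι : Type*} [Fintype ι] [DecidableEq ι]

theorem Matrix.det_diagonal_inv_sub_of {K : Type*} [Field K] (x c : ι → K) (hx : ∀ i, x i ≠ 0) :
    (diagonal (fun j => (x j)⁻¹) - of fun _ i => c i).det =
      (∏ i, (x i)⁻¹) * (1 - ∑ i, c i * x i) := by
  have hfactor : (diagonal (fun j => (x j)⁻¹) - of fun _ i => c i) =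
      diagonal (fun j => (x j)⁻¹) * (1 - replicateCol Unit x * replicateRow Unit c) := by
    rw [Matrix.mul_sub, Matrix.mul_one, ← Matrix.mul_assoc]
    ext j i
    simp [Matrix.mul_apply, diagonal_apply, inv_mul_cancel₀ (hx j)]
  rw [hfactor, det_mul, det_diagonal, det_one_sub_mul_comm, det_unique]
  simp [replicateRow_mul_replicateCol_apply, dotProduct]

theorem Matrix.diagonal_inv_sub_of_mulVec_apply {K : Type*} [Field K] (x c v : ι → K) (j : ι) :
    ((diagonal (fun j => (x j)⁻¹) - of fun _ i => c i) *ᵥ v) j =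
      v j / x j - ∑ i, c i * v i := by
  rw [sub_mulVec, Pi.sub_apply, mulVec_diagonal, div_eq_inv_mul]
  rfl

/-- Minkowski's linear forms theorem for the unit box. -/
theorem exists_int_ne_zero_abs_mulVec_lt_one (A : Matrix ι ι ℝ) (hA₀ : A.det ≠ 0)
    (hA₁ : |A.det| < 1) :
    ∃ w : ι → ℤ, w ≠ 0 ∧ ∀ j, |(A *ᵥ (Int.cast ∘ w)) j| < 1 := by
  set L := (span ℤ (Set.range (Pi.basisFun ℝ ι))).toAddSubgroup
  set s := toLin' A ⁻¹' Set.pi Set.univ fun _ => Set.Ioo (-1 : ℝ) 1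
  have : Countable L := inferInstanceAs (Countable (span ℤ (Set.range (Pi.basisFun ℝ ι))))
  have h_symm : ∀ v ∈ s, -v ∈ s := by
    intro v hv j _
    simp only [s, Set.mem_preimage, Set.mem_pi, Set.mem_Ioo, map_neg, Pi.neg_apply] at hv ⊢
    constructor <;> linarith [hv j (Set.mem_univ j)]
  have h_conv : Convex ℝ s := (convex_pi fun _ _ => convex_Ioo _ _).linear_preimage _
  have h_vol : volume s = ENNReal.ofReal |A.det⁻¹| * 2 ^ Fintype.card ι := by
    rw [Measure.addHaar_preimage_linearMap _ (by rwa [LinearMap.det_toLin']),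
      LinearMap.det_toLin', volume_pi_pi]
    simp [Real.volume_Ioo, one_add_one_eq_two]
  obtain ⟨⟨v, hvL⟩, hv0, hvs⟩ := exists_ne_zero_mem_lattice_of_measure_mul_two_pow_lt_measure
    (L := L) (ZSpan.isAddFundamentalDomain' (Pi.basisFun ℝ ι) volume) h_symm h_conv (by
      rw [h_vol, ZSpan.fundamentalDomain_pi_basisFun, volume_pi_pi,
        Module.finrank_fintype_fun_eq_card]
      simp only [Real.volume_Ico, sub_zero, ENNReal.ofReal_one, prod_const_one]
      rw [ENNReal.mul_lt_mul_iff_left (by positivity) (by finiteness), ENNReal.one_lt_ofReal,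
        abs_inv, one_lt_inv₀ (abs_pos.2 hA₀)]
      exact hA₁)
  obtain ⟨w, hw⟩ : ∃ w : ι → ℤ, Int.cast ∘ w = v := by
    choose w hw using ((Pi.basisFun ℝ ι).mem_span_iff_repr_mem ℤ v).mp hvL
    exact ⟨w, funext hw⟩
  refine ⟨w, ?_, fun j => ?_⟩
  · rintro rfl
    exact hv0 (Subtype.ext (by simpa using hw.symm))
  · simpa [s, abs_lt, hw] using hvs j (Set.mem_univ j)

end LinearForms

section Rounding

variable {ι : Type*} [Fintype ι]

theorem toNat_div_one_add_sum_lt {x c : ι → ℝ} (hx : ∀ i, 0 < x i) (hc : ∀ i, 0 ≤ c i)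
    {u : ι → ℤ} (hu : ∀ j, (u j : ℝ) / x j < 1 + ∑ i, c i * u i) (j : ι) :
    ((u j).toNat : ℝ) / (1 + ∑ i, c i * (u i).toNat) < x j := by
  have hcast : ∀ i, ((u i).toNat : ℝ) = max (u i : ℝ) 0 := fun i => by
    rw [← Int.cast_natCast, Int.toNat_eq_max]
    push_cast
    rfl
  have hsum : ∑ i, c i * u i ≤ ∑ i, c i * (u i).toNat := by
    gcongr with i
    · exact hc i
    · rw [hcast]
      exact le_max_left _ _
  have hden : 0 < 1 + ∑ i, c i * (u i).toNat :=
    add_pos_of_pos_of_nonneg one_pos (sum_nonneg fun i _ => mul_nonneg (hc i) (by positivity))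
  rw [div_lt_iff₀ hden, hcast]
  rcases le_total (u j : ℝ) 0 with hj | hj
  · rw [max_eq_right hj]
    exact mul_pos (hx j) hden
  · rw [max_eq_left hj, ← div_lt_iff₀' (hx j)]
    exact (hu j).trans_le (by linarith)

theorem exists_nat_ne_zero_div_one_add_sum_lt {x c : ι → ℝ} (hx : ∀ i, 0 < x i)
    (hc : ∀ i, 0 ≤ c i) {w : ι → ℤ} (hw₀ : w ≠ 0) (hw : ∀ j, |w j / x j - ∑ i, c i * w i| < 1) :
    ∃ z : ι → ℕ, z ≠ 0 ∧ ∀ j, (z j : ℝ) / (1 + ∑ i, c i * z i) < x j := by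
  obtain ⟨u, ⟨j₀, hj₀⟩, hu⟩ : ∃ u : ι → ℤ, (∃ j, 0 < u j) ∧
      ∀ j, (u j : ℝ) / x j < 1 + ∑ i, c i * u i := by
    by_cases hpos : ∃ j, 0 < w j
    · exact ⟨w, hpos, fun j => by linarith [(abs_lt.1 (hw j)).2]⟩
    · push Not at hpos
      obtain ⟨j₀, hj₀⟩ := Function.ne_iff.1 hw₀
      refine ⟨-w, ⟨j₀, ?_⟩, fun j => ?_⟩
      · have := hpos j₀
        simp only [Pi.neg_apply, Pi.zero_apply] at hj₀ ⊢
        omega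
      · simp only [Pi.neg_apply, Int.cast_neg, neg_div, mul_neg, sum_neg_distrib]
        linarith [(abs_lt.1 (hw j)).1]
  refine ⟨fun i => (u i).toNat, fun h => ?_, toNat_div_one_add_sum_lt hx hc hu⟩
  have := congrFun h j₀
  simp only [Pi.zero_apply, Int.toNat_eq_zero] at this
  omega

end Rounding

theorem stmt_11_general (d : ℕ) (x c : Fin d → ℝ)
    (hx : ∀ i, 0 < x i) (hc : ∀ i, 1 ≤ c i)
    (h1 : 1 - ∏ i, x i < ∑ i, c i * x i) (h2 : ∑ i, c i * x i < 1) :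
    ∃ z : Fin d → ℕ, z ≠ 0 ∧
      ∀ j, (z j : ℝ) / (1 + ∑ i, c i * z i) < x j := by
  set A : Matrix (Fin d) (Fin d) ℝ := diagonal (fun j => (x j)⁻¹) - of fun _ i => c i
  have hdet : A.det = (∏ i, (x i)⁻¹) * (1 - ∑ i, c i * x i) :=
    det_diagonal_inv_sub_of x c fun i => (hx i).ne'
  have hprod : 0 < ∏ i, x i := prod_pos fun i _ => hx i
  have hdet_pos : 0 < A.det := by
    rw [hdet, prod_inv_distrib]
    exact mul_pos (inv_pos.2 hprod) (by linarith)
  have hdet_lt : A.det < 1 := by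
    rw [hdet, prod_inv_distrib, inv_mul_lt_iff₀ hprod, mul_one]
    linarith
  obtain ⟨w, hw₀, hw⟩ := exists_int_ne_zero_abs_mulVec_lt_one A hdet_pos.ne'
    ((abs_of_pos hdet_pos).trans_lt hdet_lt)
  refine exists_nat_ne_zero_div_one_add_sum_lt hx (fun i => zero_le_one.trans (hc i)) hw₀ ?_
  intro j
  simpa only [A, diagonal_inv_sub_of_mulVec_apply, Function.comp_apply] using hw j

theorem stmt_11 (d : ℕ) (hd : 1 ≤ d) (x c : Fin d → ℝ)
    (hx : ∀ i, 0 < x i) (hc : ∀ i, 1 ≤ c i)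
    (h1 : 1 - ∏ i, x i < ∑ i, c i * x i) (h2 : ∑ i, c i * x i < 1) :
    ∃ z : Fin d → ℕ, z ≠ 0 ∧
      ∀ j, (z j : ℝ) / (1 + ∑ i, c i * z i) < x j :=
  stmt_11_general d x c hx hc h1 h2
end

section
/- Let $\square\subset\mathbb{R}^d$ be a compact convex set containing the origin in its interior, with dual body $\square^*=\{v^*\in(\mathbb{R}^d)^*: \langle v^*,v\rangle+1\ge 0\ \forall v\in\square\}$. Then $\gamma(0\in\square)=\gamma(0\in\square^*)$, where $\gamma(0\in K)=\sup\{t\ge 0: t(K-K)\subseteq K\}$. -/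
open Pointwise

namespace Stmt14

variable {d : ℕ}

def dual (K : Set (Fin d → ℝ)) : Set (Fin d → ℝ) :=
  {y : Fin d → ℝ | ∀ v ∈ K, (∑ i, y i * v i) + 1 ≥ 0}

lemma zero_mem_dual (K : Set (Fin d → ℝ)) : (0 : Fin d → ℝ) ∈ dual K := by
  intro v hv; simp

lemma dual_convex (K : Set (Fin d → ℝ)) : Convex ℝ (dual K) := by
  intro y hy z hz a b ha hb hab
  intro v hv
  have hy' := hy v hv
  have hz' := hz v hv
  have : ∑ i, (a • y + b • z) i * v i = a * ∑ i, y i * v i + b * ∑ i, z i * v i := by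
    simp [Finset.mul_sum, Finset.sum_add_distrib, add_mul, mul_assoc]
  rw [ge_iff_le, ← sub_nonneg] at *
  nlinarith [hy', hz']

lemma dual_closed (K : Set (Fin d → ℝ)) : IsClosed (dual K) := by
  have : dual K = ⋂ v ∈ K, {y : Fin d → ℝ | 0 ≤ (∑ i, y i * v i) + 1} := by
    ext y; simp [dual, ge_iff_le]
  rw [this]
  refine isClosed_biInter fun v hv => ?_
  exact isClosed_le continuous_const (by fun_prop)

lemma sum_single (y : Fin d → ℝ) (i : Fin d) (c : ℝ) :
    (∑ j, y j * (c • (Pi.single i 1 : Fin d → ℝ)) j) = c * y i := by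
  simp [Pi.single_apply, mul_ite, Finset.sum_ite_eq]
  ring

lemma dual_bounded (K : Set (Fin d → ℝ)) (h0 : (0 : Fin d → ℝ) ∈ interior K) :
    Bornology.IsBounded (dual K) := by
  obtain ⟨ε, hε, hball⟩ := Metric.mem_nhds_iff.1 (mem_interior_iff_mem_nhds.1 h0)
  rw [isBounded_iff_forall_norm_le]
  refine ⟨2 / ε, fun y hy => ?_⟩
  rw [pi_norm_le_iff_of_nonneg (by positivity)]
  intro i
  have hmem : ∀ c : ℝ, |c| < ε → c • (Pi.single i 1 : Fin d → ℝ) ∈ K := by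
    intro c hc
    apply hball
    simp only [Metric.mem_ball, dist_zero_right, norm_smul, Pi.norm_single,
      Real.norm_eq_abs, norm_one, mul_one]
    exact hc
  have h1 := hy _ (hmem (ε/2) (by rw [abs_of_pos (by positivity)]; linarith))
  have h2 := hy _ (hmem (-(ε/2)) (by rw [abs_neg, abs_of_pos (by positivity)]; linarith))
  rw [sum_single] at h1 h2
  rw [Real.norm_eq_abs]
  rcases abs_cases (y i) with ⟨he, _⟩ | ⟨he, _⟩ <;> rw [he, le_div_iff₀ hε] <;> nlinarith

lemma dual_compact (K : Set (Fin d → ℝ)) (h0 : (0 : Fin d → ℝ) ∈ interior K) :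
    IsCompact (dual K) :=
  Metric.isCompact_of_isClosed_isBounded (dual_closed K) (dual_bounded K h0)

lemma zero_mem_interior_dual (K : Set (Fin d → ℝ)) (hK : Bornology.IsBounded K) :
    (0 : Fin d → ℝ) ∈ interior (dual K) := by
  obtain ⟨R, hR⟩ := isBounded_iff_forall_norm_le.1 hK
  have hR0 : 0 ≤ max R 0 := le_max_right _ _
  set R' := max R 0
  rw [mem_interior_iff_mem_nhds, Metric.mem_nhds_iff]
  refine ⟨1 / ((d+1) * (R'+1)), by positivity, fun y hy v hv => ?_⟩
  simp only [Metric.mem_ball, dist_zero_right] at hy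
  have hbound : |∑ i, y i * v i| ≤ (d : ℝ) * (‖y‖ * R') := by
    calc |∑ i, y i * v i| ≤ ∑ i, |y i * v i| := Finset.abs_sum_le_sum_abs _ _
    _ ≤ ∑ _i : Fin d, ‖y‖ * R' := by
        refine Finset.sum_le_sum fun i _ => ?_
        rw [abs_mul]
        have h1 : |y i| ≤ ‖y‖ := norm_le_pi_norm y i
        have h2 : |v i| ≤ R' := le_trans (norm_le_pi_norm v i) (le_trans (hR v hv) (le_max_left _ _))
        exact mul_le_mul h1 h2 (abs_nonneg _) (norm_nonneg _)
    _ = (d : ℝ) * (‖y‖ * R') := by simp [Finset.sum_const]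
  have hlt : (d : ℝ) * (‖y‖ * R') < 1 := by
    have hy0 : 0 ≤ ‖y‖ := norm_nonneg _
    have h1 : (d : ℝ) * (‖y‖ * R') ≤ ((d:ℝ)+1) * (R'+1) * ‖y‖ := by nlinarith
    have h2 : ((d:ℝ)+1) * (R'+1) * ‖y‖ < ((d:ℝ)+1) * (R'+1) * (1 / ((d+1) * (R'+1))) := by
      apply mul_lt_mul_of_pos_left hy (by positivity)
    have h3 : ((d:ℝ)+1) * (R'+1) * (1 / ((d+1) * (R'+1))) = 1 := by
      field_simp
    linarith
  have h4 : -((d:ℝ) * (‖y‖ * R')) ≤ ∑ i, y i * v i := neg_le_of_abs_le hbound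
  linarith

lemma dual_dual (K : Set (Fin d → ℝ)) (hcl : IsClosed K) (hconv : Convex ℝ K)
    (h0 : (0 : Fin d → ℝ) ∈ K) : dual (dual K) = K := by
  apply Set.Subset.antisymm
  · intro x hx
    by_contra hxK
    obtain ⟨f, u, hfK, hfx⟩ := geometric_hahn_banach_closed_point hconv hcl hxK
    have hu : 0 < u := by have := hfK 0 h0; simpa using this
    set y : Fin d → ℝ := fun i => -(1/u) * f (Pi.single i 1 : Fin d → ℝ) with hy
    have hfv : ∀ v : Fin d → ℝ, f v = ∑ i, v i * f (Pi.single i 1 : Fin d → ℝ) := by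
      intro v
      conv_lhs => rw [← Finset.univ_sum_single v]
      rw [map_sum]
      congr 1; ext i
      have : (Pi.single i (v i) : Fin d → ℝ) = v i • (Pi.single i 1 : Fin d → ℝ) := by
        rw [← Pi.single_smul]; simp
      rw [this, map_smul, smul_eq_mul]
    have hyK : y ∈ dual K := by
      intro v hv
      have : ∑ i, y i * v i = -(1/u) * f v := by
        rw [hfv, Finset.mul_sum]
        congr 1; ext i; ring
      rw [this]
      have := hfK v hv
      rw [ge_iff_le, ← sub_nonneg]
      have h5 : f v / u < 1 := (div_lt_one hu).2 this
      have : -(1/u) * f v = -(f v / u) := by ring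
      rw [this]; linarith
    have := hx y hyK
    have hxy : ∑ i, x i * y i = -(1/u) * f x := by
      rw [hfv x, Finset.mul_sum]
      congr 1; ext i; ring
    rw [hxy] at this
    have h6 : 1 < f x / u := (one_lt_div hu).2 hfx
    have h7 : -(1/u) * f x = -(f x / u) := by ring
    rw [ge_iff_le, ← sub_nonneg] at this
    rw [h7] at this
    linarith
  · intro v hv y hy
    have := hy v hv
    rw [ge_iff_le, ← sub_nonneg] at *
    have hc : ∑ i, v i * y i = ∑ i, y i * v i := by
      congr 1; ext i; ring
    rw [hc]; exact this

-- the key lemma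
lemma main (K : Set (Fin d → ℝ)) (hKcpt : IsCompact K) (h0 : (0 : Fin d → ℝ) ∈ interior K)
    {t : ℝ} (ht : 0 ≤ t) (hsub : t • (K - K) ⊆ K) :
    t • (dual K - dual K) ⊆ dual K := by
  rintro x ⟨w, hw, rfl⟩
  rw [Set.mem_sub] at hw
  obtain ⟨y, hy, z, hz, rfl⟩ := hw
  by_cases hd : d = 0
  · subst hd; intro v hv; simp
  rcases eq_or_lt_of_le ht with h | htpos
  · show t • (y - z) ∈ dual K
    rw [← h, zero_smul]; exact zero_mem_dual K
  -- basic facts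
  have h0K : (0 : Fin d → ℝ) ∈ K := interior_subset h0
  obtain ⟨R, hR⟩ := isBounded_iff_forall_norm_le.1 hKcpt.isBounded
  have hsub' : ∀ a b : Fin d → ℝ, a ∈ K → b ∈ K → t • (a - b) ∈ K := by
    intro a b ha hb
    exact hsub (Set.smul_mem_smul_set (Set.sub_mem_sub ha hb))
  -- t < 1
  have ht1 : t < 1 := by
    by_contra h1
    push_neg at h1
    obtain ⟨ε, hε, hball⟩ := Metric.mem_nhds_iff.1 (mem_interior_iff_mem_nhds.1 h0)
    have hdpos : 0 < d := Nat.pos_of_ne_zero hd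
    set v : Fin d → ℝ := (ε/2) • (Pi.single (⟨0, hdpos⟩ : Fin d) 1 : Fin d → ℝ) with hv
    have hvK : v ∈ K := by
      apply hball
      simp only [Metric.mem_ball, dist_zero_right, hv, norm_smul, Pi.norm_single]
      rw [Real.norm_eq_abs, abs_of_pos (by positivity)]
      simp; linarith
    have hvnorm : ‖v‖ = ε/2 := by
      rw [hv, norm_smul, Pi.norm_single, Real.norm_eq_abs, abs_of_pos (by positivity)]
      simp
    have key : ∀ n : ℕ, (t * (2*t)^n) • v ∈ K ∧ (-(t * (2*t)^n)) • v ∈ K := by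
      intro n
      induction n with
      | zero =>
        constructor
        · have := hsub' v 0 hvK h0K; simpa using this
        · have := hsub' 0 v h0K hvK
          simpa [neg_smul, ← smul_neg, zero_sub] using this
      | succ n ih =>
        obtain ⟨ih1, ih2⟩ := ih
        set a := t * (2*t)^n
        constructor
        · have := hsub' _ _ ih1 ih2
          have heq : t • (a • v - (-a) • v) = (t * (2*t)^(n+1)) • v := by
            rw [← sub_smul, smul_smul]
            congr 1; ring
          rwa [heq] at this
        · have := hsub' _ _ ih2 ih1
          have heq : t • ((-a) • v - a • v) = (-(t * (2*t)^(n+1))) • v := by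
            rw [← sub_smul, smul_smul]
            congr 1; ring
          rwa [heq] at this
    obtain ⟨n, hn⟩ := pow_unbounded_of_one_lt (R / (ε/2)) (by norm_num : (1:ℝ) < 2)
    have h2t : (2:ℝ)^n ≤ t * (2*t)^n := by
      have : (2:ℝ)^n ≤ (2*t)^n := by
        apply pow_le_pow_left₀ (by norm_num) (by linarith)
      nlinarith [pow_pos (by linarith : (0:ℝ) < 2*t) n]
    have hmem := (key n).1
    have hnorm := hR _ hmem
    rw [norm_smul, Real.norm_eq_abs, abs_of_pos (by positivity), hvnorm] at hnorm
    have hεR : 0 < ε/2 := by positivity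
    rw [div_lt_iff₀ hεR] at hn
    nlinarith [pow_pos (by norm_num : (0:ℝ) < 2) n]
  -- -(t/(1-t)) • v ∈ K for v ∈ K
  have hneg : ∀ v ∈ K, (-(t/(1-t))) • v ∈ K := by
    intro v hv
    have key : ∀ n : ℕ, (-(t * (1 - t^n)/(1-t))) • v ∈ K := by
      intro n
      induction n with
      | zero => simpa using h0K
      | succ n ih =>
        have := hsub' _ _ ih hv
        have heq : t • ((-(t * (1 - t^n)/(1-t))) • v - v) = (-(t * (1 - t^(n+1))/(1-t))) • v := by
          have h1t : (1:ℝ) - t ≠ 0 := by linarith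
          rw [smul_sub, smul_smul, ← sub_smul]
          congr 1
          field_simp
          ring
        rwa [heq] at this
    have hc : Filter.Tendsto (fun n : ℕ => (-(t * (1 - t^n)/(1-t)))) Filter.atTop
        (nhds (-(t/(1-t)))) := by
      have h1 := tendsto_pow_atTop_nhds_zero_of_lt_one ht ht1
      have h2 : Filter.Tendsto (fun n : ℕ => t * (1 - t^n)/(1-t)) Filter.atTop
          (nhds (t * (1 - 0)/(1-t))) :=
        Filter.Tendsto.div_const (tendsto_const_nhds.mul (tendsto_const_nhds.sub h1)) _
      simpa using h2.neg
    exact hKcpt.isClosed.mem_of_tendsto (hc.smul_const v) (Filter.Eventually.of_forall key)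
  -- conclude
  show t • (y - z) ∈ dual K
  intro v hv
  have hyv := hy v hv
  have hzv := hz _ (hneg v hv)
  have hzv' : ∑ i, z i * ((-(t/(1-t))) • v) i = -(t/(1-t)) * ∑ i, z i * v i := by
    rw [Finset.mul_sum]
    congr 1; ext i
    simp only [Pi.smul_apply, smul_eq_mul]
    ring
  rw [hzv'] at hzv
  have hsum : ∑ i, (t • (y - z)) i * v i
      = t * ((∑ i, y i * v i) - ∑ i, z i * v i) := by
    rw [mul_sub, Finset.mul_sum, Finset.mul_sum, ← Finset.sum_sub_distrib]
    congr 1; ext i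
    simp only [Pi.smul_apply, Pi.sub_apply, smul_eq_mul]
    ring
  have h1t : (0:ℝ) < 1 - t := by linarith
  have hB : t * (∑ i, z i * v i) ≤ 1 - t := by
    have h' : t/(1-t) * (∑ i, z i * v i) ≤ 1 := by linarith [hzv]
    calc t * (∑ i, z i * v i) = (1-t) * (t/(1-t) * (∑ i, z i * v i)) := by field_simp
    _ ≤ (1-t) * 1 := mul_le_mul_of_nonneg_left h' h1t.le
    _ = 1 - t := mul_one _
  rw [hsum, ge_iff_le, ← sub_nonneg]
  nlinarith [hB, mul_nonneg ht (by linarith : (0:ℝ) ≤ (∑ i, y i * v i) + 1)]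

lemma set_eq (K : Set (Fin d → ℝ)) (hKcpt : IsCompact K) (hKconv : Convex ℝ K)
    (h0 : (0 : Fin d → ℝ) ∈ interior K) :
    {t : ℝ | 0 ≤ t ∧ t • (K - K) ⊆ K}
      = {t : ℝ | 0 ≤ t ∧ t • (dual K - dual K) ⊆ dual K} := by
  ext t
  simp only [Set.mem_setOf_eq]
  constructor
  · rintro ⟨ht, hsub⟩
    exact ⟨ht, main K hKcpt h0 ht hsub⟩
  · rintro ⟨ht, hsub⟩
    refine ⟨ht, ?_⟩
    have := main (dual K) (dual_compact K h0) (zero_mem_interior_dual K hKcpt.isBounded) ht hsub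
    rwa [dual_dual K hKcpt.isClosed hKconv (interior_subset h0)] at this

end Stmt14

theorem stmt_14 (d : ℕ) (K : Set (Fin d → ℝ))
    (hKcpt : IsCompact K) (hKconv : Convex ℝ K) (h0 : (0 : Fin d → ℝ) ∈ interior K) :
    sSup {t : ℝ | 0 ≤ t ∧ t • (K - K) ⊆ K}
      = sSup {t : ℝ | 0 ≤ t ∧
          t • ({y : Fin d → ℝ | ∀ v ∈ K, (∑ i, y i * v i) + 1 ≥ 0}
              - {y : Fin d → ℝ | ∀ v ∈ K, (∑ i, y i * v i) + 1 ≥ 0})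
            ⊆ {y : Fin d → ℝ | ∀ v ∈ K, (∑ i, y i * v i) + 1 ≥ 0}} :=
  congrArg sSup (Stmt14.set_eq K hKcpt hKconv h0)
end

section
/- (Van der Corput) Let $\square\subset\mathbb{R}^d$ be a compact convex set containing the origin in its interior, and let $\gamma=\gamma(0\in\square)=\sup\{t\ge 0: t(\square-\square)\subseteq\square\}$. Then the number of lattice points of $\mathbb{Z}^d$ in the interior of $\square$ satisfies $|\mathbb{Z}^d\cap\operatorname{int}(\square)|\ge \gamma^d\,\operatorname{vol}(\square)$. -/
open Pointwise MeasureTheory Set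
open scoped ENNReal

lemma vdc_tsum_indicator_le {α G : Type*} [Countable G] (A : G → Set α) (x : α) (N : ℕ)
    (h : ∀ T : Finset G, (↑T : Set G) ⊆ {g | x ∈ A g} → T.card ≤ N) :
    ∑' g : G, (A g).indicator (1 : α → ℝ≥0∞) x ≤ N := by
  classical
  rw [ENNReal.tsum_eq_iSup_sum]
  refine iSup_le fun T => ?_
  calc ∑ g ∈ T, (A g).indicator (1 : α → ℝ≥0∞) x
      = ((T.filter fun g => x ∈ A g).card : ℝ≥0∞) := by
        rw [Finset.card_filter]
        push_cast
        refine Finset.sum_congr rfl fun g _ => ?_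
        by_cases hg : x ∈ A g <;> simp [hg]
    _ ≤ (N : ℝ≥0∞) := by
        exact_mod_cast h _ fun g hg => (Finset.mem_filter.mp hg).2

lemma vdc_pigeonhole {α G : Type*} [Countable G] [MeasurableSpace α] (μ : Measure α)
    (F : Set α) (hF : MeasurableSet F) (hμF : μ F ≤ 1)
    (A : G → Set α) (hA : ∀ g, MeasurableSet (A g)) (hAF : ∀ g, A g ⊆ F)
    (N : ℕ) (h : (N : ℝ≥0∞) < ∑' g, μ (A g)) :
    ∃ x : α, ∃ T : Finset G, T.card = N + 1 ∧ ∀ g ∈ T, x ∈ A g := by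
  by_contra hcon
  push_neg at hcon
  have key : ∀ x : α, ∀ T : Finset G, (↑T : Set G) ⊆ {g | x ∈ A g} → T.card ≤ N := by
    intro x T hT
    by_contra hc
    push_neg at hc
    obtain ⟨T', hT', hcard⟩ := Finset.exists_subset_card_eq (Nat.succ_le_of_lt hc)
    obtain ⟨g, hg1, hg2⟩ := hcon x T' hcard
    exact hg2 (hT (hT' hg1))
  have hle : ∀ x, ∑' g : G, (A g).indicator (1 : α → ℝ≥0∞) x
      ≤ F.indicator (fun _ => (N : ℝ≥0∞)) x := by
    intro x
    by_cases hx : x ∈ F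
    · rw [Set.indicator_of_mem hx]
      exact vdc_tsum_indicator_le A x N (key x)
    · have hz : ∀ g : G, (A g).indicator (1 : α → ℝ≥0∞) x = 0 := fun g =>
        Set.indicator_of_notMem (fun hxa => hx (hAF g hxa)) _
      simp [hz, Set.indicator_of_notMem hx]
  have h1 : ∑' g : G, μ (A g) = ∫⁻ x, ∑' g : G, (A g).indicator (1 : α → ℝ≥0∞) x ∂μ := by
    rw [lintegral_tsum fun g => ((measurable_one.indicator (hA g)).aemeasurable)]
    congr 1
    ext g
    exact (lintegral_indicator_one (hA g)).symm
  have h2 : ∫⁻ x, ∑' g : G, (A g).indicator (1 : α → ℝ≥0∞) x ∂μ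
      ≤ ∫⁻ x, F.indicator (fun _ => (N : ℝ≥0∞)) x ∂μ := lintegral_mono hle
  rw [lintegral_indicator_const hF] at h2
  have : ∑' g : G, μ (A g) ≤ N := by
    calc ∑' g : G, μ (A g) ≤ (N : ℝ≥0∞) * μ F := h1 ▸ h2
    _ ≤ (N : ℝ≥0∞) * 1 := by gcongr
    _ = N := mul_one _
  exact absurd h (not_lt.mpr this)

theorem stmt_16 (d : ℕ) (K : Set (Fin d → ℝ))
    (hKcpt : IsCompact K) (hKconv : Convex ℝ K) (h0 : (0 : Fin d → ℝ) ∈ interior K)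
    (γ : ℝ) (hγ : γ = sSup {t : ℝ | 0 ≤ t ∧ t • (K - K) ⊆ K}) :
    γ ^ d * (MeasureTheory.volume K).toReal
      ≤ ({x : Fin d → ℝ | x ∈ interior K ∧ ∀ i, ∃ n : ℤ, x i = (n : ℝ)}.ncard : ℝ) := by
  classical
  rcases Nat.eq_zero_or_pos d with hd | hd
  · subst hd
    have hKuniv : K = univ := eq_univ_of_forall fun x => by
      rw [Subsingleton.elim x 0]; exact interior_subset h0
    subst hKuniv
    have hset : {x : Fin 0 → ℝ | x ∈ interior univ ∧ ∀ i, ∃ n : ℤ, x i = (n : ℝ)} = univ := by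
      ext x; simp [Fin.elim0]
    rw [hset, Set.ncard_univ, Nat.card_eq_fintype_card]
    have huniv : (volume (univ : Set (Fin 0 → ℝ))) = 1 := by
      rw [MeasureTheory.volume_pi, Measure.pi_univ]
      simp
    rw [huniv]
    norm_num
  have hK0 : (0 : Fin d → ℝ) ∈ K := interior_subset h0
  -- outer radius
  obtain ⟨R₀, hR₀⟩ := hKcpt.isBounded.subset_closedBall 0
  set R : ℝ := max R₀ 1 with hRdef
  have hR0 : 0 < R := lt_of_lt_of_le one_pos (le_max_right _ _)
  have hRK : K ⊆ Metric.closedBall 0 R :=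
    hR₀.trans (Metric.closedBall_subset_closedBall (le_max_left _ _))
  -- inner radius
  obtain ⟨ε₀, hε₀pos, hε₀K⟩ := Metric.mem_nhds_iff.mp (mem_interior_iff_mem_nhds.mp h0)
  set ε : ℝ := ε₀ / 2 with hεdef
  have hε0 : 0 < ε := by positivity
  have hεK : Metric.closedBall 0 ε ⊆ K := by
    refine fun x hx => hε₀K ?_
    rw [Metric.mem_closedBall] at hx
    rw [Metric.mem_ball]
    linarith
  -- the set s
  set s : Set ℝ := {t : ℝ | 0 ≤ t ∧ t • (K - K) ⊆ K} with hsdef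
  have h0s : (0:ℝ) ∈ s := by
    refine ⟨le_refl 0, ?_⟩
    refine (zero_smul_set_subset _).trans ?_
    intro x hx
    rw [Set.mem_zero] at hx
    exact hx ▸ hK0
  have hsne : s.Nonempty := ⟨0, h0s⟩
  -- bounded above
  have hsbdd : BddAbove s := by
    refine ⟨R / ε, fun t ht => ?_⟩
    obtain ⟨ht0, htK⟩ := ht
    set x₀ : Fin d → ℝ := fun _ => ε with hx₀
    have hne : Nonempty (Fin d) := ⟨⟨0, hd⟩⟩
    have hx₀K : x₀ ∈ K := by
      apply hεK
      rw [Metric.mem_closedBall, dist_zero_right, hx₀, pi_norm_const,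
        Real.norm_eq_abs, abs_of_pos hε0]
    have hx₀KK : x₀ ∈ K - K := by
      simpa using Set.sub_mem_sub hx₀K hK0
    have htx₀ : t • x₀ ∈ K := htK (smul_mem_smul_set hx₀KK)
    have hb := hRK htx₀
    rw [Metric.mem_closedBall, dist_zero_right] at hb
    have hnorm : ‖t • x₀‖ = t * ε := by
      rw [norm_smul, Real.norm_eq_abs, abs_of_nonneg ht0, hx₀, pi_norm_const,
        Real.norm_eq_abs, abs_of_pos hε0]
    rw [hnorm] at hb
    rw [le_div_iff₀ hε0]
    exact hb
  -- closed
  have hsclosed : IsClosed s := by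
    have hseq : s = {t : ℝ | 0 ≤ t} ∩ ⋂ x ∈ K - K, {t : ℝ | t • x ∈ K} := by
      ext t
      simp only [hsdef, mem_setOf_eq, mem_inter_iff, mem_iInter]
      exact and_congr_right fun _ => Set.smul_set_subset_iff
    rw [hseq]
    refine IsClosed.inter isClosed_Ici ?_
    refine isClosed_biInter fun x _ => ?_
    exact IsClosed.preimage (continuous_id.smul continuous_const) hKcpt.isClosed
  have hγs : γ ∈ s := hγ ▸ hsclosed.csSup_mem hsne hsbdd
  -- gamma positive
  have hγpos : 0 < γ := by
    have ht₀ : ε / (2 * R) ∈ s := by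
      constructor
      · positivity
      · intro y hy
        obtain ⟨z, hz, rfl⟩ := hy
        apply hεK
        rw [Metric.mem_closedBall, dist_zero_right, norm_smul, Real.norm_eq_abs,
          abs_of_pos (by positivity : (0:ℝ) < ε / (2 * R))]
        obtain ⟨a, ha, b, hb, rfl⟩ := Set.mem_sub.mp hz
        have ha' := hRK ha; have hb' := hRK hb
        rw [Metric.mem_closedBall, dist_zero_right] at ha' hb'
        have hz' : ‖a - b‖ ≤ 2 * R := by
          calc ‖a - b‖ ≤ ‖a‖ + ‖b‖ := norm_sub_le _ _
          _ ≤ 2 * R := by linarith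
        calc ε / (2 * R) * ‖a - b‖ ≤ ε / (2 * R) * (2 * R) := by
              apply mul_le_mul_of_nonneg_left hz' (by positivity)
        _ = ε := by field_simp
    calc (0:ℝ) < ε / (2 * R) := by positivity
    _ ≤ γ := hγ ▸ le_csSup hsbdd ht₀
  -- geometric inclusion
  have hIntSub : ∀ t : ℝ, 0 ≤ t → t < γ → t • (K - K) ⊆ interior K := by
    intro t ht0 htγ y hy
    obtain ⟨z, hz, rfl⟩ := hy
    have hγz : γ • z ∈ K := hγs.2 (smul_mem_smul_set hz)
    have heq : t • z = (1 - t / γ) • (0 : Fin d → ℝ) + (t / γ) • (γ • z) := by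
      rw [smul_zero, zero_add, smul_smul]
      congr 1
      field_simp
    show t • z ∈ interior K
    rw [heq]
    have hlt : t / γ < 1 := (div_lt_one hγpos).mpr htγ
    exact hKconv.combo_interior_self_mem_interior h0 hγz (by linarith)
      (by positivity) (by ring)
  -- the lattice point set
  set Λ : Set (Fin d → ℝ) := {x : Fin d → ℝ | x ∈ interior K ∧ ∀ i, ∃ n : ℤ, x i = (n : ℝ)}
    with hΛdef
  have hΛfin : Λ.Finite := by
    have hsub : Λ ⊆ (fun (n : Fin d → ℤ) (i : Fin d) => (n i : ℝ)) ''
        (Set.Icc (fun _ => -⌈R⌉) (fun _ => ⌈R⌉)) := by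
      rintro x ⟨hx1, hx2⟩
      choose n hn using hx2
      have hcoord : ∀ i, |(n i : ℝ)| ≤ R := by
        intro i
        have hxK := hRK (interior_subset hx1)
        rw [Metric.mem_closedBall, dist_zero_right] at hxK
        calc |(n i : ℝ)| = ‖x i‖ := by rw [← hn i]; rfl
        _ ≤ ‖x‖ := norm_le_pi_norm x i
        _ ≤ R := hxK
      refine ⟨n, ?_, funext fun i => (hn i).symm⟩
      rw [Set.mem_Icc]
      constructor <;> rw [Pi.le_def] <;> intro i
      · have h1 : -R ≤ (n i : ℝ) := neg_le_of_abs_le (hcoord i)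
        have h2 : ((-⌈R⌉ : ℤ) : ℝ) ≤ (n i : ℝ) := by
          push_cast
          have := Int.le_ceil R
          linarith
        exact_mod_cast h2
      · have h1 : (n i : ℝ) ≤ R := le_of_abs_le (hcoord i)
        have h2 : ((n i : ℤ) : ℝ) ≤ ((⌈R⌉ : ℤ) : ℝ) := by
          have := Int.le_ceil R
          push_cast
          linarith
        exact_mod_cast h2
    exact ((Set.finite_Icc _ _).image _).subset hsub
  set V : ℝ := (volume K).toReal with hVdef
  have hVfin : volume K ≠ ⊤ := hKcpt.measure_lt_top.ne
  have hV0 : 0 < V := by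
    refine ENNReal.toReal_pos ?_ hVfin
    refine ne_of_gt (lt_of_lt_of_le (Metric.measure_ball_pos volume 0 hε0) (measure_mono ?_))
    exact Metric.ball_subset_closedBall.trans hεK
  -- main counting estimate
  have hcount : ∀ t : ℝ, 0 < t → t < γ → t ^ d * V ≤ (Λ.ncard : ℝ) := by
    intro t ht0 htγ
    set N : ℕ := ⌈t ^ d * V⌉₊ - 1 with hNdef
    have hpos : 0 < t ^ d * V := by positivity
    have hceil1 : 1 ≤ ⌈t ^ d * V⌉₊ := Nat.one_le_ceil_iff.mpr hpos
    have hN1 : N + 1 = ⌈t ^ d * V⌉₊ := by omega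
    have hupper : t ^ d * V ≤ (N : ℝ) + 1 := by
      have h := Nat.le_ceil (t ^ d * V)
      rw [← hN1] at h
      exact_mod_cast h
    have hNlt : (N : ℝ) < t ^ d * V := by
      have h2 := Nat.ceil_lt_add_one hpos.le
      have h3 : ((N : ℝ)) = (⌈t ^ d * V⌉₊ : ℝ) - 1 := by
        rw [← hN1]; push_cast; ring
      linarith
    set S : Set (Fin d → ℝ) := t • K with hSdef
    have hScpt : IsCompact S := hKcpt.smul t
    have hSmeas : MeasurableSet S := hScpt.isClosed.measurableSet
    have hSvol : volume S = ENNReal.ofReal (t ^ d * V) := by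
      rw [hSdef, Measure.addHaar_smul,
        show volume K = ENNReal.ofReal V from (ENNReal.ofReal_toReal hVfin).symm,
        ← ENNReal.ofReal_mul (by positivity)]
      congr 2
      rw [abs_of_nonneg (by positivity)]
      rw [Module.finrank_fin_fun]
    have hNvol : (N : ℝ≥0∞) < volume S := by
      rw [hSvol, show ((N : ℝ≥0∞)) = ENNReal.ofReal (N : ℝ) by simp]
      exact (ENNReal.ofReal_lt_ofReal_iff hpos).mpr hNlt
    -- fundamental domain decomposition
    set b := Pi.basisFun ℝ (Fin d) with hbdef
    set L := Submodule.span ℤ (Set.range (b : Fin d → (Fin d → ℝ))) with hLdef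
    have hFd := ZSpan.isAddFundamentalDomain b volume
    set F := ZSpan.fundamentalDomain b with hFdef
    have hFmeas : MeasurableSet F := ZSpan.fundamentalDomain_measurableSet b
    have hF1 : volume F ≤ 1 := by
      rw [hFdef, hbdef, ZSpan.volume_fundamentalDomain]
      have hmat : (Matrix.of ⇑(Pi.basisFun ℝ (Fin d))) = 1 := by
        ext i j
        simp [Pi.basisFun_apply, Pi.single_apply, Matrix.one_apply, eq_comm]
      rw [hmat]
      simp
    haveI : MeasurableVAdd L (Fin d → ℝ) :=
      { measurable_const_vadd := fun c => by
          have : Measurable fun x : Fin d → ℝ => (c : Fin d → ℝ) + x :=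
            measurable_const.add measurable_id
          exact this
        measurable_vadd_const := fun y => by
          have : Measurable fun c : L => (c : Fin d → ℝ) + y :=
            measurable_subtype_coe.add measurable_const
          exact this }
    haveI : VAddInvariantMeasure L (Fin d → ℝ) volume :=
      ⟨fun c _ _ => measure_preimage_add volume (c : Fin d → ℝ) _⟩
    have hvadd : ∀ g : L, (g +ᵥ S : Set (Fin d → ℝ)) = (g : Fin d → ℝ) +ᵥ S := fun g => rfl
    have hdecomp : volume S = ∑' g : L, volume ((g +ᵥ S) ∩ F) := hFd.measure_eq_tsum S
    have hAmeas : ∀ g : L, MeasurableSet ((g +ᵥ S) ∩ F) := by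
      intro g
      rw [hvadd g]
      exact (hSmeas.const_vadd _).inter hFmeas
    obtain ⟨x, T, hTcard, hTmem⟩ := vdc_pigeonhole volume F hFmeas hF1
      (fun g : L => (g +ᵥ S) ∩ F) hAmeas
      (fun g => inter_subset_right) N (hdecomp ▸ hNvol)
    have hTne : T.Nonempty := Finset.card_pos.mp (by rw [hTcard]; exact N.succ_pos)
    obtain ⟨g₀, hg₀⟩ := hTne
    have hmem : ∀ g ∈ T, ((g₀ : Fin d → ℝ) - (g : Fin d → ℝ)) ∈ Λ := by
      intro g hg
      have hg1 : x ∈ (g : Fin d → ℝ) +ᵥ S := by rw [← hvadd g]; exact (hTmem g hg).1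
      have hg01 : x ∈ (g₀ : Fin d → ℝ) +ᵥ S := by rw [← hvadd g₀]; exact (hTmem g₀ hg₀).1
      obtain ⟨y, hy, hyx⟩ := hg1
      obtain ⟨y₀, hy₀, hy₀x⟩ := hg01
      obtain ⟨k, hk, rfl⟩ := hy
      obtain ⟨k₀, hk₀, rfl⟩ := hy₀
      have heq : (g : Fin d → ℝ) + t • k = (g₀ : Fin d → ℝ) + t • k₀ := by
        have e1 : (g : Fin d → ℝ) + t • k = x := hyx
        have e2 : (g₀ : Fin d → ℝ) + t • k₀ = x := hy₀x
        rw [e1, e2]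
      have hdiff : (g₀ : Fin d → ℝ) - (g : Fin d → ℝ) = t • k - t • k₀ := by
        linear_combination -heq
      constructor
      · rw [hdiff, ← smul_sub]
        exact hIntSub t ht0.le htγ (smul_mem_smul_set (Set.sub_mem_sub hk hk₀))
      · intro i
        have hmemL : ((g₀ : Fin d → ℝ) - (g : Fin d → ℝ)) ∈ L :=
          Submodule.sub_mem L g₀.2 g.2
        obtain ⟨m, hm⟩ := (b.mem_span_iff_repr_mem ℤ _).mp hmemL i
        refine ⟨m, ?_⟩
        rw [hbdef] at hm
        simp only [Pi.basisFun_repr, algebraMap_int_eq, eq_intCast] at hm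
        exact hm.symm
    have hinj : Set.InjOn (fun g : L => (g₀ : Fin d → ℝ) - (g : Fin d → ℝ)) ↑T := by
      intro a _ c _ hac
      have : (a : Fin d → ℝ) = (c : Fin d → ℝ) := by
        have := sub_right_injective hac
        exact this
      exact Subtype.coe_injective this
    have hle : (N + 1 : ℕ) ≤ Λ.ncard := by
      rw [← hTcard, ← Finset.card_image_of_injOn hinj, ← Set.ncard_coe_finset]
      refine Set.ncard_le_ncard ?_ hΛfin
      intro z hz
      rw [Finset.coe_image] at hz
      obtain ⟨g, hg, rfl⟩ := hz
      exact hmem g hg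
    calc t ^ d * V ≤ (N : ℝ) + 1 := hupper
    _ = ((N + 1 : ℕ) : ℝ) := by push_cast; ring
    _ ≤ (Λ.ncard : ℝ) := by exact_mod_cast hle
  -- limit argument
  have hlim : Filter.Tendsto (fun u : ℝ => u ^ d * V) (nhdsWithin γ (Set.Iio γ))
      (nhds (γ ^ d * V)) :=
    (((continuous_pow d).mul continuous_const).tendsto γ).mono_left nhdsWithin_le_nhds
  refine le_of_tendsto hlim ?_
  filter_upwards [Ioo_mem_nhdsLT_of_mem (⟨hγpos, le_refl γ⟩ : γ ∈ Set.Ioc 0 γ)] with u hu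
  exact hcount u hu.1 hu.2
end
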